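/- The bilinear form κ(F,G) = (F ⋆ G)(0) is supersymmetric: κ(G,F) = (−1)^{fg} κ(F,G) for F ∈ S^f, G ∈ S^g. -/

import Mathlib

open MvPolynomial

noncomputable section

variable {K : Type*} [Field K] [CharZero K] {n : ℕ}

/-- Variable index set for `S = K[p₁,q₁,…,pₙ,qₙ]`: `inl i` is `pᵢ`, `inr i` is `qᵢ`. -/
abbrev Idx (n : ℕ) := Sum (Fin n) (Fin n)

/-- The variable `pᵢ`. -/
def pV (n : ℕ) (K : Type*) [Field K] (i : Fin n) : MvPolynomial (Idx n) K := X (Sum.inl i)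

/-- The variable `qᵢ`. -/
def qV (n : ℕ) (K : Type*) [Field K] (i : Fin n) : MvPolynomial (Idx n) K := X (Sum.inr i)

/-- Left factor of one summand of `℘^k (F ⊗ G)`: for each `j : Fin k` we chose
`(i, true)` (the term `∂/∂pᵢ ⊗ ∂/∂qᵢ`) or `(i, false)` (the term `∂/∂qᵢ ⊗ ∂/∂pᵢ`). -/
def derivsL {k : ℕ} (v : Fin k → Fin n × Bool) (F : MvPolynomial (Idx n) K) :
    MvPolynomial (Idx n) K :=
  (List.finRange k).foldl
    (fun F j => pderiv (if (v j).2 then Sum.inl (v j).1 else Sum.inr (v j).1) F) F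

/-- Right factor of one summand of `℘^k (F ⊗ G)`. -/
def derivsR {k : ℕ} (v : Fin k → Fin n × Bool) (G : MvPolynomial (Idx n) K) :
    MvPolynomial (Idx n) K :=
  (List.finRange k).foldl
    (fun G j => pderiv (if (v j).2 then Sum.inr (v j).1 else Sum.inl (v j).1) G) G

/-- Moyal coefficient `C_k(F,G) = (1/(2^k k!)) (m ∘ ℘^k)(F ⊗ G)`, with
`℘(F ⊗ G) = Σᵢ (∂F/∂pᵢ ⊗ ∂G/∂qᵢ − ∂F/∂qᵢ ⊗ ∂G/∂pᵢ)` expanded multinomially. -/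
def moyalC (k : ℕ) (F G : MvPolynomial (Idx n) K) : MvPolynomial (Idx n) K :=
  ((2 ^ k * Nat.factorial k : ℕ) : K)⁻¹ •
    ∑ v : Fin k → Fin n × Bool,
      (∏ j : Fin k, if (v j).2 then (1 : K) else -1) • (derivsL v F * derivsR v G)

/-- The Moyal star product at `t = 1`: `F ⋆ G = Σ_{k ≥ 0} C_k(F,G)`; the sum is finite
since `C_k(F,G) = 0` as soon as `k` exceeds the total degree of `F`. -/
def mstar (F G : MvPolynomial (Idx n) K) : MvPolynomial (Idx n) K :=
  ∑ k ∈ Finset.range (F.totalDegree + 1), moyalC k F G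

/-- The Poisson bracket `{F,G} = Σᵢ (∂F/∂pᵢ ∂G/∂qᵢ − ∂F/∂qᵢ ∂G/∂pᵢ)`. -/
def poisson (F G : MvPolynomial (Idx n) K) : MvPolynomial (Idx n) K :=
  ∑ i : Fin n,
    (pderiv (Sum.inl i) F * pderiv (Sum.inr i) G -
      pderiv (Sum.inr i) F * pderiv (Sum.inl i) G)

/-- The supertrace `Str F = F(0)`, evaluation at the origin. -/
def Str (F : MvPolynomial (Idx n) K) : K := eval (fun _ => 0) F

lemma degree_add' {σ : Type*} (a b : σ →₀ ℕ) : (a + b).degree = a.degree + b.degree := by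
  simp [Finsupp.degree_eq_weight_one, map_add]

lemma degree_single' {σ : Type*} (i : σ) : (Finsupp.single i 1).degree = 1 := by
  classical
  simp [Finsupp.degree_single]

lemma pderiv_isHomogeneous {F : MvPolynomial (Idx n) K} {d : ℕ}
    (hF : F.IsHomogeneous d) (i : Idx n) : (pderiv i F).IsHomogeneous (d - 1) := by
  classical
  rw [F.as_sum, map_sum]
  apply MvPolynomial.IsHomogeneous.sum
  intro v hv
  rw [pderiv_monomial]
  by_cases hvi : v i = 0
  · simp [hvi, isHomogeneous_zero]
  · apply isHomogeneous_monomial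
    have hd : v.degree = d := by
      rw [Finsupp.degree_eq_weight_one]; exact hF (MvPolynomial.mem_support_iff.mp hv)
    have hle : Finsupp.single i 1 ≤ v := by
      rwa [Finsupp.single_le_iff, Nat.one_le_iff_ne_zero]
    have hsum : v - Finsupp.single i 1 + Finsupp.single i 1 = v := tsub_add_cancel_of_le hle
    have := congrArg Finsupp.degree hsum
    rw [degree_add', degree_single'] at this
    omega

lemma eq_C_of_isHomogeneous_zero {F : MvPolynomial (Idx n) K}
    (hF : F.IsHomogeneous 0) : F = C (coeff 0 F) := by
  ext m
  by_cases hm : m = 0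
  · simp [hm]
  · rw [hF.coeff_eq_zero, coeff_C, if_neg (Ne.symm hm)]
    rw [Ne, Finsupp.degree_eq_zero_iff]
    exact hm

section Foldl
variable {α : Type*} (idx : α → Idx n)

lemma foldl_pderiv_zero (l : List α) :
    l.foldl (fun P j => pderiv (idx j) P) (0 : MvPolynomial (Idx n) K) = 0 := by
  induction l with
  | nil => rfl
  | cons a l ih => simpa using ih

lemma foldl_pderiv_isHomogeneous (l : List α) :
    ∀ {F : MvPolynomial (Idx n) K} {d : ℕ}, F.IsHomogeneous d →
    (l.foldl (fun P j => pderiv (idx j) P) F).IsHomogeneous (d - l.length) := by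
  induction l with
  | nil => intro F d hF; simpa using hF
  | cons a l ih =>
    intro F d hF
    have := ih (pderiv_isHomogeneous hF (idx a))
    simpa [Nat.sub_sub, Nat.add_comm] using this

lemma foldl_pderiv_eq_zero (l : List α) :
    ∀ {F : MvPolynomial (Idx n) K} {d : ℕ}, F.IsHomogeneous d → d < l.length →
    l.foldl (fun P j => pderiv (idx j) P) F = 0 := by
  induction l with
  | nil => intro F d _ h; simp at h
  | cons a l ih =>
    intro F d hF h
    rcases Nat.eq_zero_or_pos d with hd | hd
    · subst hd
      have : pderiv (idx a) F = 0 := by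
        rw [eq_C_of_isHomogeneous_zero hF, pderiv_C]
      simp only [List.foldl_cons, this]
      exact foldl_pderiv_zero idx l
    · have h' : d - 1 < l.length := by simp at h; omega
      simpa using ih (pderiv_isHomogeneous hF (idx a)) h'

end Foldl

lemma derivsL_isHomogeneous {k f : ℕ} (v : Fin k → Fin n × Bool)
    {F : MvPolynomial (Idx n) K} (hF : F.IsHomogeneous f) :
    (derivsL v F).IsHomogeneous (f - k) := by
  have := foldl_pderiv_isHomogeneous
    (fun j => if (v j).2 then Sum.inl (v j).1 else Sum.inr (v j).1) (List.finRange k) hF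
  simpa [derivsL] using this

lemma derivsR_isHomogeneous {k g : ℕ} (v : Fin k → Fin n × Bool)
    {G : MvPolynomial (Idx n) K} (hG : G.IsHomogeneous g) :
    (derivsR v G).IsHomogeneous (g - k) := by
  have := foldl_pderiv_isHomogeneous
    (fun j => if (v j).2 then Sum.inr (v j).1 else Sum.inl (v j).1) (List.finRange k) hG
  simpa [derivsR] using this

lemma derivsL_eq_zero {k f : ℕ} (v : Fin k → Fin n × Bool)
    {F : MvPolynomial (Idx n) K} (hF : F.IsHomogeneous f) (h : f < k) :
    derivsL v F = 0 := by
  have := foldl_pderiv_eq_zero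
    (fun j => if (v j).2 then Sum.inl (v j).1 else Sum.inr (v j).1) (List.finRange k) hF
    (by simpa using h)
  simpa [derivsL] using this

lemma derivsR_eq_zero {k g : ℕ} (v : Fin k → Fin n × Bool)
    {G : MvPolynomial (Idx n) K} (hG : G.IsHomogeneous g) (h : g < k) :
    derivsR v G = 0 := by
  have := foldl_pderiv_eq_zero
    (fun j => if (v j).2 then Sum.inr (v j).1 else Sum.inl (v j).1) (List.finRange k) hG
    (by simpa using h)
  simpa [derivsR] using this

lemma derivsL_zero {k : ℕ} (v : Fin k → Fin n × Bool) :
    derivsL v (0 : MvPolynomial (Idx n) K) = 0 :=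
  foldl_pderiv_zero _ _

lemma derivsR_zero {k : ℕ} (v : Fin k → Fin n × Bool) :
    derivsR v (0 : MvPolynomial (Idx n) K) = 0 :=
  foldl_pderiv_zero _ _

lemma Str_sum {ι : Type*} (s : Finset ι) (h : ι → MvPolynomial (Idx n) K) :
    Str (∑ i ∈ s, h i) = ∑ i ∈ s, Str (h i) :=
  map_sum (eval _) _ _

lemma Str_smul (c : K) (P : MvPolynomial (Idx n) K) : Str (c • P) = c * Str P := by
  simp [Str, smul_eq_C_mul]

lemma Str_homogeneous_ne_zero {P : MvPolynomial (Idx n) K} {d : ℕ}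
    (hP : P.IsHomogeneous d) (hd : d ≠ 0) : Str P = 0 := by
  have : Str P = coeff 0 P := by
    rw [Str, eval_zero', constantCoeff_eq]
  rw [this]
  apply hP.coeff_eq_zero
  simpa using Ne.symm hd

lemma Str_moyalC_of_ne_left {k f : ℕ} {F G : MvPolynomial (Idx n) K}
    (hF : F.IsHomogeneous f) (hk : k ≠ f) : Str (moyalC k F G) = 0 := by
  rw [moyalC, Str_smul, Str_sum]
  rw [Finset.sum_eq_zero, mul_zero]
  intro v _
  rw [Str_smul]
  rcases lt_or_gt_of_ne hk with h | h
  · -- k < f : derivsL homogeneous of positive degree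
    have h1 : Str (derivsL v F) = 0 :=
      Str_homogeneous_ne_zero (derivsL_isHomogeneous v hF) (by omega)
    rw [show Str (derivsL v F * derivsR v G) = Str (derivsL v F) * Str (derivsR v G) from
      map_mul _ _ _, h1, zero_mul, mul_zero]
  · rw [derivsL_eq_zero v hF h, zero_mul]
    simp [Str]

lemma Str_moyalC_of_ne_right {k g : ℕ} {F G : MvPolynomial (Idx n) K}
    (hG : G.IsHomogeneous g) (hk : k ≠ g) : Str (moyalC k F G) = 0 := by
  rw [moyalC, Str_smul, Str_sum]
  rw [Finset.sum_eq_zero, mul_zero]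
  intro v _
  rw [Str_smul]
  rcases lt_or_gt_of_ne hk with h | h
  · have h1 : Str (derivsR v G) = 0 :=
      Str_homogeneous_ne_zero (derivsR_isHomogeneous v hG) (by omega)
    rw [show Str (derivsL v F * derivsR v G) = Str (derivsL v F) * Str (derivsR v G) from
      map_mul _ _ _, h1, mul_zero, mul_zero]
  · rw [derivsR_eq_zero v hG h, mul_zero]
    simp [Str]

/-- The sign-flip involution on choices. -/
def negv {k : ℕ} (v : Fin k → Fin n × Bool) : Fin k → Fin n × Bool :=
  fun j => ((v j).1, !(v j).2)

lemma derivsL_negv {k : ℕ} (v : Fin k → Fin n × Bool) (F : MvPolynomial (Idx n) K) :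
    derivsL (negv v) F = derivsR v F := by
  unfold derivsL derivsR negv
  congr 1
  funext P j
  cases h : (v j).2 <;> simp [h]

lemma derivsR_negv {k : ℕ} (v : Fin k → Fin n × Bool) (F : MvPolynomial (Idx n) K) :
    derivsR (negv v) F = derivsL v F := by
  unfold derivsL derivsR negv
  congr 1
  funext P j
  cases h : (v j).2 <;> simp [h]

lemma sign_negv {k : ℕ} (v : Fin k → Fin n × Bool) :
    (∏ j : Fin k, if (negv v j).2 then (1 : K) else -1) =
      (-1 : K) ^ k * ∏ j : Fin k, if (v j).2 then (1 : K) else -1 := by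
  have : ∀ j : Fin k, (if (negv v j).2 then (1 : K) else -1) =
      -1 * (if (v j).2 then (1 : K) else -1) := by
    intro j; cases h : (v j).2 <;> simp [negv, h]
  rw [Finset.prod_congr rfl fun j _ => this j, Finset.prod_mul_distrib]
  simp

/-- The key swap identity. -/
lemma moyalC_swap (k : ℕ) (F G : MvPolynomial (Idx n) K) :
    moyalC k G F = ((-1 : K) ^ k) • moyalC k F G := by
  unfold moyalC
  rw [smul_comm]
  congr 1
  rw [Finset.smul_sum]
  have hinv : Function.Involutive (negv (n := n) (k := k)) := fun v => by
    funext j; simp [negv]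
  apply Fintype.sum_equiv hinv.toPerm
  intro v
  simp only [Function.Involutive.coe_toPerm]
  show (∏ j : Fin k, if (v j).2 then (1 : K) else -1) • (derivsL v G * derivsR v F) =
    ((-1 : K) ^ k) • ((∏ j : Fin k, if (negv v j).2 then (1 : K) else -1) •
      (derivsL (negv v) F * derivsR (negv v) G))
  rw [sign_negv, derivsL_negv, derivsR_negv, mul_smul, mul_comm (derivsL v G)]
  simp only [smul_smul, ← mul_assoc, ← mul_pow, neg_mul_neg, one_mul, one_pow]

lemma moyalC_zero_left (k : ℕ) (G : MvPolynomial (Idx n) K) :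
    moyalC k (0 : MvPolynomial (Idx n) K) G = 0 := by
  unfold moyalC
  rw [Finset.sum_eq_zero, smul_zero]
  intro v _
  rw [derivsL_zero, zero_mul, smul_zero]

lemma moyalC_zero_right (k : ℕ) (F : MvPolynomial (Idx n) K) :
    moyalC k F (0 : MvPolynomial (Idx n) K) = 0 := by
  unfold moyalC
  rw [Finset.sum_eq_zero, smul_zero]
  intro v _
  rw [derivsR_zero, mul_zero, smul_zero]

/-- Supersymmetry of `κ`: `κ(G,F) = (−1)^{fg} κ(F,G)` for `F ∈ S^f`, `G ∈ S^g`. -/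
theorem stmt8 (F G : MvPolynomial (Idx n) K) (f g : ℕ)
    (hF : F.IsHomogeneous f) (hG : G.IsHomogeneous g) :
    Str (mstar G F) = ((-1 : K) ^ (f * g)) * Str (mstar F G) := by
  by_cases hF0 : F = 0
  · subst hF0
    simp [mstar, moyalC_zero_left, moyalC_zero_right, Str]
  by_cases hG0 : G = 0
  · subst hG0
    simp [mstar, moyalC_zero_left, moyalC_zero_right, Str]
  have htF : F.totalDegree = f := hF.totalDegree hF0
  have htG : G.totalDegree = g := hG.totalDegree hG0
  have hL : Str (mstar G F) = Str (moyalC g G F) := by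
    rw [mstar, Str_sum, htG]
    apply Finset.sum_eq_single_of_mem g (Finset.self_mem_range_succ g)
    intro k _ hk
    exact Str_moyalC_of_ne_left hG hk
  have hR : Str (mstar F G) = Str (moyalC f F G) := by
    rw [mstar, Str_sum, htF]
    apply Finset.sum_eq_single_of_mem f (Finset.self_mem_range_succ f)
    intro k _ hk
    exact Str_moyalC_of_ne_left hF hk
  rw [hL, hR, moyalC_swap, Str_smul]
  by_cases hfg : f = g
  · subst hfg
    congr 1
    rcases Nat.even_or_odd f with h | h
    · rw [h.neg_one_pow, (h.mul_right f).neg_one_pow]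
    · rw [h.neg_one_pow, (h.mul h).neg_one_pow]
  · rw [Str_moyalC_of_ne_left hF (Ne.symm hfg), Str_moyalC_of_ne_right hG hfg]
    ring


end
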